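/- arXiv:1307.7014 — 8 statements merged into one kernel-verified Lean document; each statement's English description precedes it below -/
import Mathlib

section
/- Let f : R → S be a surjective unital ring homomorphism between associative unital rings, and let u ∈ M_n(S) be invertible. Then there exists an invertible matrix V ∈ M_{2n}(R) such that applying f entrywise to V yields diag(u, u⁻¹) ∈ M_{2n}(S). (Such a V can be obtained by lifting each factor of the factorization diag(u,u⁻¹) = [[1,u],[0,1]]·[[1,0],[-u⁻¹,1]]·[[1,u],[0,1]]·[[0,-1],[1,0]].) -/
/-!
Whitehead's factorisation
`diag(u, u⁻¹) = [[1,u],[0,1]] · [[1,0],[-u⁻¹,1]] · [[1,u],[0,1]] · [[0,-1],[1,0]]`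
writes `diag(u, u⁻¹)` as a product of elementary block matrices. Each factor lifts along `f`
to a matrix of the same shape over `R`, simply by lifting its off-diagonal block entrywise, and
such matrices are invertible over any ring; hence so is their product, which maps to
`diag(u, u⁻¹)`.
-/

open Matrix

namespace Matrix

variable {R : Type*} [Ring R] {n : Type*} [Fintype n] [DecidableEq n]

theorem isUnit_fromBlocks_one_zero₂₁_one (a : Matrix n n R) :
    IsUnit (fromBlocks 1 a 0 1 : Matrix (n ⊕ n) (n ⊕ n) R) :=
  ⟨⟨fromBlocks 1 a 0 1, fromBlocks 1 (-a) 0 1, by simp [fromBlocks_multiply],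
    by simp [fromBlocks_multiply]⟩, rfl⟩

theorem isUnit_fromBlocks_one_zero₁₂_one (a : Matrix n n R) :
    IsUnit (fromBlocks 1 0 a 1 : Matrix (n ⊕ n) (n ⊕ n) R) :=
  ⟨⟨fromBlocks 1 0 a 1, fromBlocks 1 0 (-a) 1, by simp [fromBlocks_multiply],
    by simp [fromBlocks_multiply]⟩, rfl⟩

theorem isUnit_fromBlocks_zero_neg_one_one_zero :
    IsUnit (fromBlocks 0 (-1) 1 0 : Matrix (n ⊕ n) (n ⊕ n) R) :=
  ⟨⟨fromBlocks 0 (-1) 1 0, fromBlocks 0 1 (-1) 0, by simp [fromBlocks_multiply],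
    by simp [fromBlocks_multiply]⟩, rfl⟩

theorem fromBlocks_diagonal_eq_whitehead {u u' : Matrix n n R} (hu : u * u' = 1)
    (hu' : u' * u = 1) :
    fromBlocks u 0 0 u' =
      fromBlocks 1 u 0 1 * fromBlocks 1 0 (-u') 1 * fromBlocks 1 u 0 1 * fromBlocks 0 (-1) 1 0 := by
  simp [fromBlocks_multiply, hu, hu']

end Matrix

/-- If f : R → S is a surjective unital ring homomorphism and u ∈ M_n(S) is
invertible, then diag(u,u⁻¹) lifts to an invertible matrix V ∈ M_{2n}(R). -/
theorem stmt_9 {R S : Type*} [Ring R] [Ring S] (f : R →+* S)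
    (hf : Function.Surjective f) (n : ℕ)
    (u u' : Matrix (Fin n) (Fin n) S) (hu : u * u' = 1) (hu' : u' * u = 1) :
    ∃ V W : Matrix (Fin n ⊕ Fin n) (Fin n ⊕ Fin n) R,
      V * W = 1 ∧ W * V = 1 ∧ V.map f = Matrix.fromBlocks u 0 0 u' := by
  obtain ⟨g, hg⟩ := hf.hasRightInverse
  have hlift (v : Matrix (Fin n) (Fin n) S) : (v.map g).map f = v := by
    simp [Matrix.map_map, hg.comp_eq_id]
  obtain ⟨V, hV⟩ : IsUnit (fromBlocks 1 (u.map g) 0 1 * fromBlocks 1 0 (-u'.map g) 1 *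
      fromBlocks 1 (u.map g) 0 1 * fromBlocks 0 (-1) 1 0 : Matrix (Fin n ⊕ Fin n) _ R) :=
    (((isUnit_fromBlocks_one_zero₂₁_one _).mul (isUnit_fromBlocks_one_zero₁₂_one _)).mul
      (isUnit_fromBlocks_one_zero₂₁_one _)).mul isUnit_fromBlocks_zero_neg_one_one_zero
  refine ⟨V, ↑V⁻¹, V.mul_inv, V.inv_mul, ?_⟩
  rw [hV, fromBlocks_diagonal_eq_whitehead hu hu']
  simp [Matrix.map_mul, fromBlocks_map, Matrix.map_neg _ (map_neg f), hlift]
end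

section
/- Let f : R → S be a surjective unital ring homomorphism between associative unital rings, let α ∈ M_n(S) be invertible, and set ξ = diag(α, α⁻¹) ∈ M_{2n}(S). Then there exists an invertible matrix Ṽ ∈ M_{2n}(R) with f_*(Ṽ) = ξ, and the 4n×4n matrix W = diag(Ṽ, Ṽ⁻¹) is invertible in M_{4n}(R), satisfies f_*(W) = diag(ξ, ξ⁻¹), and f_*(W) is conjugate in M_{4n}(S), by an invertible matrix, to diag(ξ, ξ) = ξ ⊕ ξ. -/
/-!
Whitehead's lemma: for mutually inverse `a`, `b`, the block matrix `diag(a, b)` is the product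
`[1 a; 0 1] [1 0; -b 1] [1 a; 0 1] [0 -1; 1 0]`. Every factor is an elementary block matrix
with an evident inverse and lifts along the surjection `f` once `a` and `b` are lifted entrywise,
so the product of the lifts is an invertible lift of `diag(α, α⁻¹)`, although the lifts of `α`
and `α⁻¹` themselves need not be invertible. Conjugating by the block swap exchanges the
diagonal blocks of `diag(α⁻¹, α)`.
-/

open Function

namespace Matrix

variable {l m n o p : Type*} {R S : Type*} [Ring R] [Ring S]

theorem map_surjective {α β : Type*} {f : α → β} (hf : Surjective f) :
    Surjective fun A : Matrix o p α => A.map f :=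
  fun B => ⟨of fun i j => (hf (B i j)).choose, ext fun i j => (hf (B i j)).choose_spec⟩

theorem fromBlocks_diag_mul_fromBlocks_diag [Fintype l] [Fintype m] (A : Matrix o l R)
    (D : Matrix p m R) (A' : Matrix l n R) (D' : Matrix m n R) :
    fromBlocks A 0 0 D * fromBlocks A' 0 0 D' = fromBlocks (A * A') 0 0 (D * D') := by
  simp [fromBlocks_multiply]

variable [Fintype m] [Fintype n] [DecidableEq m] [DecidableEq n]

theorem fromBlocks_swap_mul_fromBlocks_swap :
    (fromBlocks 0 1 1 0 : Matrix (n ⊕ m) (m ⊕ n) R) *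
      (fromBlocks 0 1 1 0 : Matrix (m ⊕ n) (n ⊕ m) R) = 1 := by
  simp [fromBlocks_multiply, ← fromBlocks_one]

theorem fromBlocks_swap_mul_fromBlocks_diag_mul_fromBlocks_swap (A : Matrix m m R)
    (D : Matrix n n R) :
    (fromBlocks 0 1 1 0 : Matrix (n ⊕ m) (m ⊕ n) R) * fromBlocks A 0 0 D *
      (fromBlocks 0 1 1 0 : Matrix (m ⊕ n) (n ⊕ m) R) = fromBlocks D 0 0 A := by
  simp [fromBlocks_multiply]

def blockUpperUnitriangular (a : Matrix m n R) : (Matrix (m ⊕ n) (m ⊕ n) R)ˣ where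
  val := fromBlocks 1 a 0 1
  inv := fromBlocks 1 (-a) 0 1
  val_inv := by simp [fromBlocks_multiply, ← fromBlocks_one]
  inv_val := by simp [fromBlocks_multiply, ← fromBlocks_one]

def blockLowerUnitriangular (c : Matrix n m R) : (Matrix (m ⊕ n) (m ⊕ n) R)ˣ where
  val := fromBlocks 1 0 c 1
  inv := fromBlocks 1 0 (-c) 1
  val_inv := by simp [fromBlocks_multiply, ← fromBlocks_one]
  inv_val := by simp [fromBlocks_multiply, ← fromBlocks_one]

variable (m R) in
def blockRotation : (Matrix (m ⊕ m) (m ⊕ m) R)ˣ where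
  val := fromBlocks 0 (-1) 1 0
  inv := fromBlocks 0 1 (-1) 0
  val_inv := by simp [fromBlocks_multiply, ← fromBlocks_one]
  inv_val := by simp [fromBlocks_multiply, ← fromBlocks_one]

def whiteheadUnit (a b : Matrix m m R) : (Matrix (m ⊕ m) (m ⊕ m) R)ˣ :=
  blockUpperUnitriangular a * blockLowerUnitriangular (-b) * blockUpperUnitriangular a *
    blockRotation m R

theorem coe_whiteheadUnit {a b : Matrix m m R} (hab : a * b = 1) (hba : b * a = 1) :
    (whiteheadUnit a b : Matrix (m ⊕ m) (m ⊕ m) R) = fromBlocks a 0 0 b := by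
  simp [whiteheadUnit, blockUpperUnitriangular, blockLowerUnitriangular, blockRotation,
    fromBlocks_multiply, hab, hba]

theorem map_whiteheadUnit (f : R →+* S) (a b : Matrix m m R) :
    (whiteheadUnit a b : Matrix (m ⊕ m) (m ⊕ m) R).map f =
      whiteheadUnit (a.map f) (b.map f) := by
  simp [whiteheadUnit, blockUpperUnitriangular, blockLowerUnitriangular, blockRotation,
    Matrix.map_mul, fromBlocks_map, Matrix.map_neg]

theorem exists_unit_map_eq_fromBlocks {f : R →+* S} (hf : Surjective f) {α α' : Matrix m m S}
    (hα : α * α' = 1) (hα' : α' * α = 1) :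
    ∃ V : (Matrix (m ⊕ m) (m ⊕ m) R)ˣ,
      (V : Matrix (m ⊕ m) (m ⊕ m) R).map f = fromBlocks α 0 0 α' ∧
      (↑V⁻¹ : Matrix (m ⊕ m) (m ⊕ m) R).map f = fromBlocks α' 0 0 α := by
  obtain ⟨β, hβ⟩ : ∃ β : Matrix m m R, β.map f = α := map_surjective hf α
  obtain ⟨β', hβ'⟩ : ∃ β' : Matrix m m R, β'.map f = α' := map_surjective hf α'
  have hV : (whiteheadUnit β β' : Matrix (m ⊕ m) (m ⊕ m) R).map f = fromBlocks α 0 0 α' := by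
    rw [map_whiteheadUnit, hβ, hβ', coe_whiteheadUnit hα hα']
  refine ⟨whiteheadUnit β β', hV, left_inv_eq_right_inv (a := fromBlocks α 0 0 α') ?_ ?_⟩
  · rw [← hV, ← Matrix.map_mul, Units.inv_mul, Matrix.map_one _ f.map_zero f.map_one]
  · rw [fromBlocks_diag_mul_fromBlocks_diag, hα, hα', fromBlocks_one]

end Matrix

open Matrix

/-- For f : R → S surjective and α ∈ M_n(S) invertible, with ξ = diag(α,α⁻¹):
there is an invertible lift Ṽ ∈ M_{2n}(R) of ξ, the matrix W = diag(Ṽ,Ṽ⁻¹) is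
invertible in M_{4n}(R), f_*(W) = diag(ξ,ξ⁻¹), and f_*(W) is conjugate in
M_{4n}(S), by an invertible matrix, to diag(ξ,ξ) = ξ ⊕ ξ. -/
theorem stmt_10 {R S : Type*} [Ring R] [Ring S] (f : R →+* S)
    (hf : Function.Surjective f) (n : ℕ)
    (α α' : Matrix (Fin n) (Fin n) S) (hα : α * α' = 1) (hα' : α' * α = 1) :
    ∃ V V' : Matrix (Fin n ⊕ Fin n) (Fin n ⊕ Fin n) R,
      V * V' = 1 ∧ V' * V = 1 ∧
      V.map f = Matrix.fromBlocks α 0 0 α' ∧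
      Matrix.fromBlocks V 0 0 V' * Matrix.fromBlocks V' 0 0 V = 1 ∧
      Matrix.fromBlocks V' 0 0 V * Matrix.fromBlocks V 0 0 V' = 1 ∧
      (Matrix.fromBlocks V 0 0 V').map f =
        Matrix.fromBlocks (Matrix.fromBlocks α 0 0 α') 0 0
          (Matrix.fromBlocks α' 0 0 α) ∧
      ∃ C C' : Matrix ((Fin n ⊕ Fin n) ⊕ (Fin n ⊕ Fin n))
          ((Fin n ⊕ Fin n) ⊕ (Fin n ⊕ Fin n)) S,
        C * C' = 1 ∧ C' * C = 1 ∧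
        (Matrix.fromBlocks V 0 0 V').map f =
          C * Matrix.fromBlocks (Matrix.fromBlocks α 0 0 α') 0 0
            (Matrix.fromBlocks α 0 0 α') * C' := by
  obtain ⟨V, hV, hV'⟩ := exists_unit_map_eq_fromBlocks hf hα hα'
  have hW : (fromBlocks (V : Matrix _ _ R) 0 0 ↑V⁻¹).map f =
      fromBlocks (fromBlocks α 0 0 α') 0 0 (fromBlocks α' 0 0 α) := by
    rw [fromBlocks_map, hV, hV', Matrix.map_zero _ f.map_zero]
  let P : Matrix (Fin n ⊕ Fin n) (Fin n ⊕ Fin n) S := fromBlocks 0 1 1 0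
  have hPP : fromBlocks (1 : Matrix (Fin n ⊕ Fin n) (Fin n ⊕ Fin n) S) 0 0 P *
      fromBlocks 1 0 0 P = 1 := by
    rw [fromBlocks_diag_mul_fromBlocks_diag, fromBlocks_swap_mul_fromBlocks_swap, one_mul,
      fromBlocks_one]
  refine ⟨V, ↑V⁻¹, V.mul_inv, V.inv_mul, hV, ?_, ?_, hW, fromBlocks 1 0 0 P, fromBlocks 1 0 0 P,
    hPP, hPP, ?_⟩
  · rw [fromBlocks_diag_mul_fromBlocks_diag, V.mul_inv, V.inv_mul, fromBlocks_one]
  · rw [fromBlocks_diag_mul_fromBlocks_diag, V.mul_inv, V.inv_mul, fromBlocks_one]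
  · rw [hW, fromBlocks_diag_mul_fromBlocks_diag, fromBlocks_diag_mul_fromBlocks_diag, one_mul,
      mul_one]
    exact congrArg (fromBlocks _ 0 0)
      (fromBlocks_swap_mul_fromBlocks_diag_mul_fromBlocks_swap α α').symm
end

section
/- Let j₁ : Λ₁ → Λ' and j₂ : Λ₂ → Λ' be unital ring homomorphisms and let Λ be the pullback ring, i.e. the subring of Λ₁ × Λ₂ of pairs (λ₁, λ₂) with j₁(λ₁) = j₂(λ₂). Let p₁ ∈ M_n(Λ₁) and p₂ ∈ M_n(Λ₂) be idempotent matrices and u ∈ M_n(Λ') an invertible matrix with j₁_*(p₁) = u · j₂_*(p₂) · u⁻¹. Assume u lifts to an invertible matrix ũ ∈ M_n(Λ₂) with j₂_*(ũ) = u. Then, setting p₂' = ũ p₂ ũ⁻¹, every pair of corresponding entries ((p₁)_{ij}, (p₂')_{ij}) lies in Λ, and the resulting matrix p = ((p₁)_{ij}, (p₂')_{ij}) ∈ M_n(Λ) is idempotent. -/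
/-! Since j₂ maps the inverse of the lift ũ to the inverse of u, the conjugate ũ p₂ ũ⁻¹ has the
same image in M_n(Λ') as p₁, so the pair (p₁, ũ p₂ ũ⁻¹) is a matrix over the pullback ring.
It is idempotent because both components are, p₂' being a conjugate of an idempotent. -/

/-- The pullback ring of two ring homomorphisms j₁ : Λ₁ → Λ' and j₂ : Λ₂ → Λ',
as a subring of Λ₁ × Λ₂. -/
def ringPullback {Λ₁ Λ₂ Λ' : Type*} [Ring Λ₁] [Ring Λ₂] [Ring Λ']
    (j₁ : Λ₁ →+* Λ') (j₂ : Λ₂ →+* Λ') : Subring (Λ₁ × Λ₂) where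
  carrier := {x | j₁ x.1 = j₂ x.2}
  zero_mem' := by simp
  one_mem' := by simp
  add_mem' := by
    intro a b ha hb
    simp only [Set.mem_setOf_eq, Prod.fst_add, Prod.snd_add, map_add] at *
    rw [ha, hb]
  neg_mem' := by
    intro a ha
    simp only [Set.mem_setOf_eq, Prod.fst_neg, Prod.snd_neg, map_neg] at *
    rw [ha]
  mul_mem' := by
    intro a b ha hb
    simp only [Set.mem_setOf_eq, Prod.fst_mul, Prod.snd_mul, map_mul] at *
    rw [ha, hb]

theorem IsIdempotentElem.mul_mul_of_mul_eq_one {M : Type*} [Monoid M] {p v v' : M}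
    (hp : IsIdempotentElem p) (hv' : v' * v = 1) : IsIdempotentElem (v * p * v') := by
  calc v * p * v' * (v * p * v') = v * p * (v' * v) * p * v' := by simp only [mul_assoc]
    _ = v * p * v' := by rw [hv', mul_one, mul_assoc v, hp.eq]

theorem map_eq_of_mul_eq_one {M N F : Type*} [Monoid M] [Monoid N] [FunLike F M N]
    [MonoidHomClass F M N] (f : F) {v v' : M} {u' : N} (hv' : v' * v = 1) (hu : f v * u' = 1) :
    f v' = u' :=
  left_inv_eq_right_inv (by rw [← map_mul, hv', map_one]) hu

theorem Matrix.of_prod_mul_of_prod {l m n R S : Type*} [Fintype m]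
    [NonUnitalNonAssocSemiring R] [NonUnitalNonAssocSemiring S]
    (A : Matrix l m R) (B : Matrix m n R) (C : Matrix l m S) (D : Matrix m n S) :
    of (fun i j => (A i j, C i j)) * of (fun i j => (B i j, D i j)) =
      of (fun i j => ((A * B) i j, (C * D) i j)) := by
  ext i j <;> simp [Matrix.mul_apply, Prod.fst_sum, Prod.snd_sum]

theorem Matrix.isIdempotentElem_of_prod {m R S : Type*} [Fintype m]
    [NonUnitalNonAssocSemiring R] [NonUnitalNonAssocSemiring S]
    {A : Matrix m m R} {C : Matrix m m S} (hA : IsIdempotentElem A) (hC : IsIdempotentElem C) :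
    IsIdempotentElem (of fun i j => (A i j, C i j)) := by
  rw [IsIdempotentElem, of_prod_mul_of_prod, hA.eq, hC.eq]

theorem mk_mem_ringPullback_of_map_eq {Λ₁ Λ₂ Λ' m n : Type*} [Ring Λ₁] [Ring Λ₂] [Ring Λ']
    {j₁ : Λ₁ →+* Λ'} {j₂ : Λ₂ →+* Λ'} {A : Matrix m n Λ₁} {B : Matrix m n Λ₂}
    (h : A.map j₁ = B.map j₂) (i : m) (j : n) : (A i j, B i j) ∈ ringPullback j₁ j₂ :=
  congrFun (congrFun h i) j

theorem stmt_11_general {Λ₁ Λ₂ Λ' : Type*} [Ring Λ₁] [Ring Λ₂] [Ring Λ']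
    (j₁ : Λ₁ →+* Λ') (j₂ : Λ₂ →+* Λ') (n : ℕ)
    (p₁ : Matrix (Fin n) (Fin n) Λ₁) (p₂ : Matrix (Fin n) (Fin n) Λ₂)
    (hp₁ : p₁ * p₁ = p₁) (hp₂ : p₂ * p₂ = p₂)
    (u u' : Matrix (Fin n) (Fin n) Λ') (hu : u * u' = 1)
    (hconj : p₁.map j₁ = u * p₂.map j₂ * u')
    (v v' : Matrix (Fin n) (Fin n) Λ₂) (hv' : v' * v = 1)
    (hlift : v.map j₂ = u) :
    (∀ i j : Fin n,
      (p₁ i j, (v * p₂ * v') i j) ∈ ringPullback j₁ j₂) ∧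
    (Matrix.of fun i j : Fin n => (p₁ i j, (v * p₂ * v') i j)) *
        (Matrix.of fun i j : Fin n => (p₁ i j, (v * p₂ * v') i j)) =
      (Matrix.of fun i j : Fin n => (p₁ i j, (v * p₂ * v') i j)) := by
  have hv'lift : v'.map j₂ = u' :=
    map_eq_of_mul_eq_one j₂.mapMatrix hv' (by rwa [RingHom.mapMatrix_apply, hlift])
  have hmap : p₁.map j₁ = (v * p₂ * v').map j₂ := by
    rw [Matrix.map_mul, Matrix.map_mul, hlift, hv'lift, hconj]
  exact ⟨mk_mem_ringPullback_of_map_eq hmap,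
    Matrix.isIdempotentElem_of_prod hp₁ (IsIdempotentElem.mul_mul_of_mul_eq_one hp₂ hv')⟩

/-- Lemma 28: if p₁, p₂ are idempotents with j₁_*(p₁) = u·j₂_*(p₂)·u⁻¹ and the
invertible u lifts to an invertible v (= ũ) over Λ₂, then with p₂' = v·p₂·v⁻¹ all
entry pairs of (p₁, p₂') lie in the pullback ring Λ and the resulting matrix over Λ
(equivalently, over Λ₁ × Λ₂) is idempotent. -/
theorem stmt_11 {Λ₁ Λ₂ Λ' : Type*} [Ring Λ₁] [Ring Λ₂] [Ring Λ']
    (j₁ : Λ₁ →+* Λ') (j₂ : Λ₂ →+* Λ') (n : ℕ)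
    (p₁ : Matrix (Fin n) (Fin n) Λ₁) (p₂ : Matrix (Fin n) (Fin n) Λ₂)
    (hp₁ : p₁ * p₁ = p₁) (hp₂ : p₂ * p₂ = p₂)
    (u u' : Matrix (Fin n) (Fin n) Λ') (hu : u * u' = 1) (hu' : u' * u = 1)
    (hconj : p₁.map j₁ = u * p₂.map j₂ * u')
    (v v' : Matrix (Fin n) (Fin n) Λ₂) (hv : v * v' = 1) (hv' : v' * v = 1)
    (hlift : v.map j₂ = u) :
    (∀ i j : Fin n,
      (p₁ i j, (v * p₂ * v') i j) ∈ ringPullback j₁ j₂) ∧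
    (Matrix.of fun i j : Fin n => (p₁ i j, (v * p₂ * v') i j)) *
        (Matrix.of fun i j : Fin n => (p₁ i j, (v * p₂ * v') i j)) =
      (Matrix.of fun i j : Fin n => (p₁ i j, (v * p₂ * v') i j)) :=
  stmt_11_general j₁ j₂ n p₁ p₂ hp₁ hp₂ u u' hu hconj v v' hv' hlift
end

section
/- Let j₁ : Λ₁ → Λ' and j₂ : Λ₂ → Λ' be unital ring homomorphisms with j₂ surjective, and let Λ be the pullback ring. Let p₁ ∈ M_n(Λ₁) and p₂ ∈ M_n(Λ₂) be idempotent matrices and u ∈ M_n(Λ') an invertible matrix such that j₁_*(p₁) = u · j₂_*(p₂) · u⁻¹. Then: (a) j₁_*(p₁ ⊕ 0_n) = U · j₂_*(p₂ ⊕ 0_n) · U⁻¹ where U = diag(u, u⁻¹) ∈ M_{2n}(Λ'); (b) there exists an invertible Ũ ∈ M_{2n}(Λ₂) with j₂_*(Ũ) = U; and (c) setting p̃₂ = Ũ (p₂ ⊕ 0_n) Ũ⁻¹, the pair (p₁ ⊕ 0_n, p̃₂) defines an idempotent matrix p ∈ M_{2n}(Λ) with i₁_*(p) = p₁ ⊕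 0_n and i₂_*(p) = p̃₂. -/
/-!
By Whitehead's lemma, `diag(u, u⁻¹)` is a product of the elementary block matrices
`[[1, u], [0, 1]]`, `[[1, 0], [-u⁻¹, 1]]`, `[[1, u], [0, 1]]` and `[[0, -1], [1, 0]]`. Elementary
matrices lift along the surjection `j₂` to elementary, hence invertible, matrices over `Λ₂`, so
`diag(u, u⁻¹)` lifts to an invertible `W`. Then `W (p₂ ⊕ 0) W⁻¹` and `p₁ ⊕ 0` have the same image
over `Λ'`, so their entries pair up to a matrix over the pullback ring, idempotent because both
components are.
-/

open Matrix

theorem IsIdempotentElem.conj {M : Type*} [Monoid M] {p w w' : M} (hp : IsIdempotentElem p)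
    (hw : w' * w = 1) : IsIdempotentElem (w * p * w') :=
  calc w * p * w' * (w * p * w') = w * p * (w' * w) * p * w' := by simp only [mul_assoc]
    _ = w * p * w' := by rw [hw, mul_one, mul_assoc w p p, hp.eq]

namespace Matrix

section Blocks

variable {m n R : Type*} [Fintype m] [Fintype n] [Ring R]

theorem isIdempotentElem_fromBlocks_zero {p : Matrix m m R} (hp : IsIdempotentElem p) :
    IsIdempotentElem (fromBlocks p 0 0 0 : Matrix (m ⊕ n) (m ⊕ n) R) := by
  simp [IsIdempotentElem, fromBlocks_multiply, hp.eq]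

theorem fromBlocks_diag_mul_fromBlocks_diag_s12 (a b : Matrix m m R) (c d : Matrix n n R) :
    fromBlocks a 0 0 c * fromBlocks b 0 0 d = fromBlocks (a * b) 0 0 (c * d) := by
  simp [fromBlocks_multiply]

variable [DecidableEq m] [DecidableEq n]

theorem fromBlocks_diag_mul_eq_one {u u' : Matrix m m R} {v v' : Matrix n n R}
    (hu : u * u' = 1) (hv : v * v' = 1) : fromBlocks u 0 0 v * fromBlocks u' 0 0 v' = 1 := by
  rw [fromBlocks_diag_mul_fromBlocks_diag_s12, hu, hv, fromBlocks_one]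

theorem isUnit_fromBlocks_one_upper (v : Matrix m n R) :
    IsUnit (fromBlocks 1 v 0 1 : Matrix (m ⊕ n) (m ⊕ n) R) :=
  ⟨⟨fromBlocks 1 v 0 1, fromBlocks 1 (-v) 0 1,
    by simp [fromBlocks_multiply], by simp [fromBlocks_multiply]⟩, rfl⟩

theorem isUnit_fromBlocks_one_lower (v : Matrix n m R) :
    IsUnit (fromBlocks 1 0 v 1 : Matrix (m ⊕ n) (m ⊕ n) R) :=
  ⟨⟨fromBlocks 1 0 v 1, fromBlocks 1 0 (-v) 1,
    by simp [fromBlocks_multiply], by simp [fromBlocks_multiply]⟩, rfl⟩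

theorem isUnit_fromBlocks_rotation :
    IsUnit (fromBlocks 0 (-1) 1 0 : Matrix (m ⊕ m) (m ⊕ m) R) :=
  ⟨⟨fromBlocks 0 (-1) 1 0, fromBlocks 0 1 (-1) 0,
    by simp [fromBlocks_multiply], by simp [fromBlocks_multiply]⟩, rfl⟩

/-- Whitehead's lemma. -/
theorem elementary_mul_eq_fromBlocks_diag {u u' : Matrix m m R} (hu : u * u' = 1)
    (hu' : u' * u = 1) :
    fromBlocks 1 u 0 1 * fromBlocks 1 0 (-u') 1 * fromBlocks 1 u 0 1 * fromBlocks 0 (-1) 1 0 =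
      fromBlocks u 0 0 u' := by
  simp [fromBlocks_multiply, hu, hu']

end Blocks

theorem exists_units_map_eq_fromBlocks_diag {m R S : Type*} [Fintype m] [DecidableEq m] [Ring R]
    [Ring S] {j : S →+* R} (hj : Function.Surjective j) {u u' : Matrix m m R}
    (hu : u * u' = 1) (hu' : u' * u = 1) :
    ∃ W : (Matrix (m ⊕ m) (m ⊕ m) S)ˣ, (W : Matrix (m ⊕ m) (m ⊕ m) S).map j =
      fromBlocks u 0 0 u' := by
  obtain ⟨v, rfl⟩ : ∃ v : Matrix m m S, v.map j = u := hj.comp_left.comp_left u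
  obtain ⟨v', rfl⟩ : ∃ v' : Matrix m m S, v'.map j = u' := hj.comp_left.comp_left u'
  obtain ⟨W, hW⟩ := (((isUnit_fromBlocks_one_upper v).mul (isUnit_fromBlocks_one_lower (-v'))).mul
    (isUnit_fromBlocks_one_upper v)).mul (isUnit_fromBlocks_rotation (R := S))
  refine ⟨W, ?_⟩
  rw [hW, ← elementary_mul_eq_fromBlocks_diag hu hu']
  simp [fromBlocks_map, Matrix.map_neg]

theorem of_prod_mul_of_prod_s12 {l m n R S : Type*} [Fintype m] [Semiring R] [Semiring S]
    (A : Matrix l m R) (C : Matrix m n R) (B : Matrix l m S) (D : Matrix m n S) :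
    (of fun i j => (A i j, B i j)) * (of fun i j => (C i j, D i j)) =
      of fun i j => ((A * C) i j, (B * D) i j) := by
  ext i j <;> simp [mul_apply, Prod.fst_sum, Prod.snd_sum]

end Matrix

/-- Theorem 27 / Lemma 29 (idempotent case): with j₂ surjective and
j₁_*(p₁) = u·j₂_*(p₂)·u⁻¹, one has
(a) j₁_*(p₁⊕0) = U·j₂_*(p₂⊕0)·U⁻¹ with U = diag(u,u⁻¹);
(b) U lifts to an invertible W ∈ M_{2n}(Λ₂);
(c) with p̃₂ = W·(p₂⊕0)·W⁻¹, the pair (p₁⊕0, p̃₂) has all entry pairs in the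
pullback ring Λ and defines an idempotent matrix p over Λ whose coordinate
projections are p₁⊕0 and p̃₂. -/
theorem stmt_12 {Λ₁ Λ₂ Λ' : Type*} [Ring Λ₁] [Ring Λ₂] [Ring Λ']
    (j₁ : Λ₁ →+* Λ') (j₂ : Λ₂ →+* Λ') (hj₂ : Function.Surjective j₂) (n : ℕ)
    (p₁ : Matrix (Fin n) (Fin n) Λ₁) (p₂ : Matrix (Fin n) (Fin n) Λ₂)
    (hp₁ : p₁ * p₁ = p₁) (hp₂ : p₂ * p₂ = p₂)
    (u u' : Matrix (Fin n) (Fin n) Λ') (hu : u * u' = 1) (hu' : u' * u = 1)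
    (hconj : p₁.map j₁ = u * p₂.map j₂ * u') :
    (Matrix.fromBlocks p₁ 0 0 0).map j₁ =
      Matrix.fromBlocks u 0 0 u' * ((Matrix.fromBlocks p₂ 0 0 0 : Matrix (Fin n ⊕ Fin n) (Fin n ⊕ Fin n) Λ₂)).map j₂ *
        Matrix.fromBlocks u' 0 0 u ∧
    ∃ W W' : Matrix (Fin n ⊕ Fin n) (Fin n ⊕ Fin n) Λ₂,
      W * W' = 1 ∧ W' * W = 1 ∧
      W.map j₂ = Matrix.fromBlocks u 0 0 u' ∧
      (∀ i j : Fin n ⊕ Fin n,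
        (((Matrix.fromBlocks p₁ 0 0 0 : Matrix (Fin n ⊕ Fin n) (Fin n ⊕ Fin n) Λ₁)) i j,
          (W * (Matrix.fromBlocks p₂ 0 0 0 : Matrix (Fin n ⊕ Fin n) (Fin n ⊕ Fin n) Λ₂) * W') i j) ∈ ringPullback j₁ j₂) ∧
      (Matrix.of fun i j : Fin n ⊕ Fin n =>
            (((Matrix.fromBlocks p₁ 0 0 0 : Matrix (Fin n ⊕ Fin n) (Fin n ⊕ Fin n) Λ₁)) i j,
              (W * (Matrix.fromBlocks p₂ 0 0 0 : Matrix (Fin n ⊕ Fin n) (Fin n ⊕ Fin n) Λ₂) * W') i j)) *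
          (Matrix.of fun i j : Fin n ⊕ Fin n =>
            (((Matrix.fromBlocks p₁ 0 0 0 : Matrix (Fin n ⊕ Fin n) (Fin n ⊕ Fin n) Λ₁)) i j,
              (W * (Matrix.fromBlocks p₂ 0 0 0 : Matrix (Fin n ⊕ Fin n) (Fin n ⊕ Fin n) Λ₂) * W') i j)) =
        (Matrix.of fun i j : Fin n ⊕ Fin n =>
          (((Matrix.fromBlocks p₁ 0 0 0 : Matrix (Fin n ⊕ Fin n) (Fin n ⊕ Fin n) Λ₁)) i j,
            (W * (Matrix.fromBlocks p₂ 0 0 0 : Matrix (Fin n ⊕ Fin n) (Fin n ⊕ Fin n) Λ₂) * W') i j)) ∧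
      (Matrix.of fun i j : Fin n ⊕ Fin n =>
          (((Matrix.fromBlocks p₁ 0 0 0 : Matrix (Fin n ⊕ Fin n) (Fin n ⊕ Fin n) Λ₁)) i j,
            (W * (Matrix.fromBlocks p₂ 0 0 0 : Matrix (Fin n ⊕ Fin n) (Fin n ⊕ Fin n) Λ₂) * W') i j)).map
          (RingHom.fst Λ₁ Λ₂) = Matrix.fromBlocks p₁ 0 0 0 ∧
      (Matrix.of fun i j : Fin n ⊕ Fin n =>
          (((Matrix.fromBlocks p₁ 0 0 0 : Matrix (Fin n ⊕ Fin n) (Fin n ⊕ Fin n) Λ₁)) i j,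
            (W * (Matrix.fromBlocks p₂ 0 0 0 : Matrix (Fin n ⊕ Fin n) (Fin n ⊕ Fin n) Λ₂) * W') i j)).map
          (RingHom.snd Λ₁ Λ₂) = W * (Matrix.fromBlocks p₂ 0 0 0 : Matrix (Fin n ⊕ Fin n) (Fin n ⊕ Fin n) Λ₂) * W' := by
  set P₁ : Matrix (Fin n ⊕ Fin n) (Fin n ⊕ Fin n) Λ₁ := fromBlocks p₁ 0 0 0
  set P₂ : Matrix (Fin n ⊕ Fin n) (Fin n ⊕ Fin n) Λ₂ := fromBlocks p₂ 0 0 0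
  have conj : P₁.map j₁ = fromBlocks u 0 0 u' * P₂.map j₂ * fromBlocks u' 0 0 u := by
    simp [P₁, P₂, fromBlocks_map, fromBlocks_multiply, hconj]
  obtain ⟨W, hW⟩ := exists_units_map_eq_fromBlocks_diag hj₂ hu hu'
  set W' : Matrix (Fin n ⊕ Fin n) (Fin n ⊕ Fin n) Λ₂ := ↑W⁻¹
  have hW' : W'.map j₂ = fromBlocks u' 0 0 u := by
    refine (left_inv_eq_right_inv (a := (W : Matrix _ _ Λ₂).map j₂) ?_ ?_).symm
    · rw [hW]
      exact fromBlocks_diag_mul_eq_one hu' hu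
    · simpa [W'] using (map_mul j₂.mapMatrix (W : Matrix _ _ Λ₂) W').symm
  have hlift : (W * P₂ * W').map j₂ = P₁.map j₁ := by
    rw [Matrix.map_mul, Matrix.map_mul, hW, hW', conj]
  have hidem : IsIdempotentElem (W * P₂ * W') :=
    (isIdempotentElem_fromBlocks_zero hp₂).conj W.inv_mul
  refine ⟨conj, W, W', W.mul_inv, W.inv_mul, hW, fun i j => (congrFun₂ hlift i j).symm, ?_, ?_, ?_⟩
  · rw [of_prod_mul_of_prod_s12, (isIdempotentElem_fromBlocks_zero hp₁).eq, hidem.eq]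
  · ext; rfl
  · ext; rfl
end

section
/- Let j₁ : Λ₁ → Λ' and j₂ : Λ₂ → Λ' be unital ring homomorphisms with j₂ surjective, and let Λ be the pullback ring. Let s₁ ∈ M_n(Λ₁) and s₂ ∈ M_n(Λ₂) be invertible matrices and u ∈ M_n(Λ') an invertible matrix such that j₁_*(s₁) = u · j₂_*(s₂) · u⁻¹. Then there exists an invertible matrix Ũ ∈ M_{2n}(Λ₂) with j₂_*(Ũ) = diag(u, u⁻¹), and, setting s̃₂ = Ũ · diag(s₂, 1_n) · Ũ⁻¹, the pair (diag(s₁, 1_n), s̃₂) defines an invertible matrix s ∈ M_{2n}(Λ) with i₁_*(s) = diag(s₁, 1_n) and i₂_*(s) = s̃₂. -/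
theorem Units.conj_mul_conj_eq_one {M : Type*} [Monoid M] (w : Mˣ) {a b : M} (h : a * b = 1) :
    ↑w * a * ↑w⁻¹ * (↑w * b * ↑w⁻¹) = 1 := by
  simp only [mul_assoc, Units.inv_mul_cancel_left]
  rw [← mul_assoc a, h, one_mul, Units.mul_inv]

theorem inverse_eq_conj_of_eq_conj {M : Type*} [Monoid M] {a a' b b' u u' : M}
    (ha : a * a' = 1) (hb : b' * b = 1) (hu : u * u' = 1) (hu' : u' * u = 1)
    (h : a = u * b * u') : a' = u * b' * u' := by
  refine (left_inv_eq_right_inv ?_ ha).symm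
  rw [h, mul_assoc, mul_assoc, ← mul_assoc u', ← mul_assoc u', hu', one_mul, ← mul_assoc b', hb,
    one_mul, hu]

namespace Matrix

variable {m R S : Type*} [Fintype m] [DecidableEq m] [Ring R] [Ring S]

def upperBlockUnit (x : Matrix m m R) : (Matrix (m ⊕ m) (m ⊕ m) R)ˣ where
  val := fromBlocks 1 x 0 1
  inv := fromBlocks 1 (-x) 0 1
  val_inv := by simp [fromBlocks_multiply, ← fromBlocks_one]
  inv_val := by simp [fromBlocks_multiply, ← fromBlocks_one]

def lowerBlockUnit (x : Matrix m m R) : (Matrix (m ⊕ m) (m ⊕ m) R)ˣ where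
  val := fromBlocks 1 0 x 1
  inv := fromBlocks 1 0 (-x) 1
  val_inv := by simp [fromBlocks_multiply, ← fromBlocks_one]
  inv_val := by simp [fromBlocks_multiply, ← fromBlocks_one]

theorem map_upperBlockUnit (f : R →+* S) (x : Matrix m m R) :
    (↑(upperBlockUnit x) : Matrix (m ⊕ m) (m ⊕ m) R).map f = ↑(upperBlockUnit (x.map f)) := by
  simp [upperBlockUnit, fromBlocks_map]

theorem map_lowerBlockUnit (f : R →+* S) (x : Matrix m m R) :
    (↑(lowerBlockUnit x) : Matrix (m ⊕ m) (m ⊕ m) R).map f = ↑(lowerBlockUnit (x.map f)) := by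
  simp [lowerBlockUnit, fromBlocks_map]

/-- Whitehead's lemma. With `w x := upperBlockUnit x * lowerBlockUnit (-x⁻¹) * upperBlockUnit x`,
which is `fromBlocks 0 x (-x⁻¹) 0`, this reads `diag(u, u⁻¹) = w u * w (-1)`. -/
theorem fromBlocks_zero_zero_eq_blockUnit_prod {u u' : Matrix m m R} (hu : u * u' = 1)
    (hu' : u' * u = 1) :
    fromBlocks u 0 0 u' =
      ↑(upperBlockUnit u * lowerBlockUnit (-u') * upperBlockUnit u *
        (upperBlockUnit (-1) * lowerBlockUnit 1 * upperBlockUnit (-1)) :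
          (Matrix (m ⊕ m) (m ⊕ m) R)ˣ) := by
  simp [upperBlockUnit, lowerBlockUnit, fromBlocks_multiply, hu, hu']

theorem exists_unit_map_eq_fromBlocks_of_surjective {f : R →+* S} (hf : Function.Surjective f)
    {u u' : Matrix m m S} (hu : u * u' = 1) (hu' : u' * u = 1) :
    ∃ W : (Matrix (m ⊕ m) (m ⊕ m) R)ˣ,
      (W : Matrix (m ⊕ m) (m ⊕ m) R).map f = fromBlocks u 0 0 u' ∧
      (↑W⁻¹ : Matrix (m ⊕ m) (m ⊕ m) R).map f = fromBlocks u' 0 0 u := by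
  set g := Function.surjInv hf
  have map_lift (x : Matrix m m S) : (x.map g).map f = x := by
    ext; simp [g, Function.surjInv_eq]
  let W := upperBlockUnit (u.map g) * lowerBlockUnit (-u'.map g) * upperBlockUnit (u.map g) *
    (upperBlockUnit (-1) * lowerBlockUnit 1 * upperBlockUnit (-1))
  have hW : (W : Matrix (m ⊕ m) (m ⊕ m) R).map f = fromBlocks u 0 0 u' := by
    simp [W, map_upperBlockUnit, map_lowerBlockUnit, map_lift, Matrix.map_neg _ (map_neg f),
      Matrix.map_one _ f.map_zero f.map_one, fromBlocks_zero_zero_eq_blockUnit_prod hu hu']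
  refine ⟨W, hW, left_inv_eq_right_inv (a := (W : Matrix (m ⊕ m) (m ⊕ m) R).map f) ?_ ?_⟩
  · rw [← Matrix.map_mul, W.inv_mul, Matrix.map_one _ f.map_zero f.map_one]
  · simp [hW, fromBlocks_multiply, hu, hu', ← fromBlocks_one]

theorem fromBlocks_mul_fromBlocks_eq_one {x y : Matrix m m R} (h : x * y = 1) :
    (fromBlocks x 0 0 1 : Matrix (m ⊕ m) (m ⊕ m) R) * fromBlocks y 0 0 1 = 1 := by
  simp [fromBlocks_multiply, h, ← fromBlocks_one]

theorem map_fromBlocks_one_eq_map_conj {R₁ R₂ : Type*} [Ring R₁] [Ring R₂] {f₁ : R₁ →+* S}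
    {f₂ : R₂ →+* S} {u u' : Matrix m m S} (hu' : u' * u = 1) {W : (Matrix (m ⊕ m) (m ⊕ m) R₂)ˣ}
    (hW : (W : Matrix (m ⊕ m) (m ⊕ m) R₂).map f₂ = fromBlocks u 0 0 u')
    (hW' : (↑W⁻¹ : Matrix (m ⊕ m) (m ⊕ m) R₂).map f₂ = fromBlocks u' 0 0 u)
    {t₁ : Matrix m m R₁} {t₂ : Matrix m m R₂} (h : t₁.map f₁ = u * t₂.map f₂ * u') :
    (fromBlocks t₁ 0 0 1 : Matrix (m ⊕ m) (m ⊕ m) R₁).map f₁ =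
      ((W : Matrix (m ⊕ m) (m ⊕ m) R₂) * fromBlocks t₂ 0 0 1 *
        (↑W⁻¹ : Matrix (m ⊕ m) (m ⊕ m) R₂)).map f₂ := by
  simp [Matrix.map_mul, hW, hW', fromBlocks_map, fromBlocks_multiply, h, hu', mul_assoc,
    Matrix.map_one _ f₁.map_zero f₁.map_one, Matrix.map_one _ f₂.map_zero f₂.map_one]

theorem of_prodMk_mul_of_prodMk_eq_one {A C : Matrix m m R} {B D : Matrix m m S}
    (h₁ : A * C = 1) (h₂ : B * D = 1) :
    (of fun i j => (A i j, B i j)) * (of fun i j => (C i j, D i j)) = 1 := by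
  ext i j
  · simpa [mul_apply, Prod.fst_sum, one_apply, apply_ite] using congrFun₂ h₁ i j
  · simpa [mul_apply, Prod.snd_sum, one_apply, apply_ite] using congrFun₂ h₂ i j

end Matrix

/-- Theorem 35 (invertible case): with j₂ surjective, s₁ and s₂ invertible and
j₁_*(s₁) = u·j₂_*(s₂)·u⁻¹, there is an invertible W ∈ M_{2n}(Λ₂) with
j₂_*(W) = diag(u,u⁻¹); setting s̃₂ = W·diag(s₂,1)·W⁻¹, the pair
(diag(s₁,1), s̃₂) has all entry pairs in the pullback ring Λ and defines an
invertible matrix s over Λ whose projections are diag(s₁,1) and s̃₂. -/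
theorem stmt_13 {Λ₁ Λ₂ Λ' : Type*} [Ring Λ₁] [Ring Λ₂] [Ring Λ']
    (j₁ : Λ₁ →+* Λ') (j₂ : Λ₂ →+* Λ') (hj₂ : Function.Surjective j₂) (n : ℕ)
    (s₁ s₁' : Matrix (Fin n) (Fin n) Λ₁) (hs₁ : s₁ * s₁' = 1) (hs₁' : s₁' * s₁ = 1)
    (s₂ s₂' : Matrix (Fin n) (Fin n) Λ₂) (hs₂ : s₂ * s₂' = 1) (hs₂' : s₂' * s₂ = 1)
    (u u' : Matrix (Fin n) (Fin n) Λ') (hu : u * u' = 1) (hu' : u' * u = 1)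
    (hconj : s₁.map j₁ = u * s₂.map j₂ * u') :
    ∃ W W' : Matrix (Fin n ⊕ Fin n) (Fin n ⊕ Fin n) Λ₂,
      W * W' = 1 ∧ W' * W = 1 ∧
      W.map j₂ = Matrix.fromBlocks u 0 0 u' ∧
      (∀ i j : Fin n ⊕ Fin n,
        ((Matrix.fromBlocks s₁ 0 0 1 : Matrix (Fin n ⊕ Fin n) (Fin n ⊕ Fin n) Λ₁) i j,
          (W * (Matrix.fromBlocks s₂ 0 0 1 : Matrix (Fin n ⊕ Fin n) (Fin n ⊕ Fin n) Λ₂)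
            * W') i j) ∈ ringPullback j₁ j₂) ∧
      (∀ i j : Fin n ⊕ Fin n,
        ((Matrix.fromBlocks s₁' 0 0 1 : Matrix (Fin n ⊕ Fin n) (Fin n ⊕ Fin n) Λ₁) i j,
          (W * (Matrix.fromBlocks s₂' 0 0 1 : Matrix (Fin n ⊕ Fin n) (Fin n ⊕ Fin n) Λ₂)
            * W') i j) ∈ ringPullback j₁ j₂) ∧
      (Matrix.of fun i j : Fin n ⊕ Fin n =>
            ((Matrix.fromBlocks s₁ 0 0 1 : Matrix (Fin n ⊕ Fin n) (Fin n ⊕ Fin n) Λ₁) i j,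
              (W * (Matrix.fromBlocks s₂ 0 0 1 : Matrix (Fin n ⊕ Fin n) (Fin n ⊕ Fin n) Λ₂)
                * W') i j)) *
          (Matrix.of fun i j : Fin n ⊕ Fin n =>
            ((Matrix.fromBlocks s₁' 0 0 1 : Matrix (Fin n ⊕ Fin n) (Fin n ⊕ Fin n) Λ₁) i j,
              (W * (Matrix.fromBlocks s₂' 0 0 1 : Matrix (Fin n ⊕ Fin n) (Fin n ⊕ Fin n) Λ₂)
                * W') i j)) = 1 ∧
      (Matrix.of fun i j : Fin n ⊕ Fin n =>
            ((Matrix.fromBlocks s₁' 0 0 1 : Matrix (Fin n ⊕ Fin n) (Fin n ⊕ Fin n) Λ₁) i j,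
              (W * (Matrix.fromBlocks s₂' 0 0 1 : Matrix (Fin n ⊕ Fin n) (Fin n ⊕ Fin n) Λ₂)
                * W') i j)) *
          (Matrix.of fun i j : Fin n ⊕ Fin n =>
            ((Matrix.fromBlocks s₁ 0 0 1 : Matrix (Fin n ⊕ Fin n) (Fin n ⊕ Fin n) Λ₁) i j,
              (W * (Matrix.fromBlocks s₂ 0 0 1 : Matrix (Fin n ⊕ Fin n) (Fin n ⊕ Fin n) Λ₂)
                * W') i j)) = 1 ∧
      (Matrix.of fun i j : Fin n ⊕ Fin n =>
          ((Matrix.fromBlocks s₁ 0 0 1 : Matrix (Fin n ⊕ Fin n) (Fin n ⊕ Fin n) Λ₁) i j,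
            (W * (Matrix.fromBlocks s₂ 0 0 1 : Matrix (Fin n ⊕ Fin n) (Fin n ⊕ Fin n) Λ₂)
              * W') i j)).map (RingHom.fst Λ₁ Λ₂) = Matrix.fromBlocks s₁ 0 0 1 ∧
      (Matrix.of fun i j : Fin n ⊕ Fin n =>
          ((Matrix.fromBlocks s₁ 0 0 1 : Matrix (Fin n ⊕ Fin n) (Fin n ⊕ Fin n) Λ₁) i j,
            (W * (Matrix.fromBlocks s₂ 0 0 1 : Matrix (Fin n ⊕ Fin n) (Fin n ⊕ Fin n) Λ₂)
              * W') i j)).map (RingHom.snd Λ₁ Λ₂) =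
        W * (Matrix.fromBlocks s₂ 0 0 1 : Matrix (Fin n ⊕ Fin n) (Fin n ⊕ Fin n) Λ₂) * W' := by
  obtain ⟨W, hW, hW'⟩ := Matrix.exists_unit_map_eq_fromBlocks_of_surjective hj₂ hu hu'
  have hmap₁ : s₁.map j₁ * s₁'.map j₁ = 1 := by
    rw [← Matrix.map_mul, hs₁, Matrix.map_one _ j₁.map_zero j₁.map_one]
  have hmap₂ : s₂'.map j₂ * s₂.map j₂ = 1 := by
    rw [← Matrix.map_mul, hs₂', Matrix.map_one _ j₂.map_zero j₂.map_one]
  have hconj' : s₁'.map j₁ = u * s₂'.map j₂ * u' :=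
    inverse_eq_conj_of_eq_conj hmap₁ hmap₂ hu hu' hconj
  have hglue := Matrix.map_fromBlocks_one_eq_map_conj hu' hW hW' hconj
  have hglue' := Matrix.map_fromBlocks_one_eq_map_conj hu' hW hW' hconj'
  refine ⟨W, ↑W⁻¹, W.mul_inv, W.inv_mul, hW, fun i j => congrFun₂ hglue i j,
    fun i j => congrFun₂ hglue' i j, ?_, ?_, rfl, rfl⟩
  · exact Matrix.of_prodMk_mul_of_prodMk_eq_one (Matrix.fromBlocks_mul_fromBlocks_eq_one hs₁)
      (W.conj_mul_conj_eq_one (Matrix.fromBlocks_mul_fromBlocks_eq_one hs₂))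
  · exact Matrix.of_prodMk_mul_of_prodMk_eq_one (Matrix.fromBlocks_mul_fromBlocks_eq_one hs₁')
      (W.conj_mul_conj_eq_one (Matrix.fromBlocks_mul_fromBlocks_eq_one hs₂'))
end

section
/- Let R be an associative unital ring and let A, B ∈ M_n(R) be arbitrary matrices (not assumed invertible). Set S₀ = 1_n − BA and S₁ = 1_n − AB. Then the 2n×2n block matrix L = [[S₀, −(1_n + S₀)B],[A, S₁]] is invertible, with inverse L⁻¹ = [[S₀, (1_n + S₀)B],[−A, S₁]]. -/
/-!
The two identities `A S₀ = S₁ A` and `B S₁ = S₀ B` let every block of the product be computed: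
the diagonal blocks become `S² + (1 + S)(1 - S) = 1` and the off-diagonal blocks cancel.
The second product is the first one for the pair `(-A, -B)`, which leaves `S₀` and `S₁` unchanged.
-/

theorem mul_self_add_one_add_mul_one_sub {α : Type*} [Ring α] (s : α) :
    s * s + (1 + s) * (1 - s) = 1 := by
  noncomm_ring

namespace Matrix

variable {l m R : Type*} [Fintype l] [Fintype m] [DecidableEq l] [DecidableEq m] [Ring R]

theorem mul_one_sub_mul_comm (A : Matrix m l R) (B : Matrix l m R) :
    A * (1 - B * A) = (1 - A * B) * A := by
  rw [Matrix.mul_sub, Matrix.sub_mul, Matrix.mul_one, Matrix.one_mul, Matrix.mul_assoc]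

theorem fromBlocks_one_sub_mul_mul_fromBlocks_one_sub_mul (A : Matrix m l R) (B : Matrix l m R) :
    fromBlocks (1 - B * A) (-((1 + (1 - B * A)) * B)) A (1 - A * B) *
      fromBlocks (1 - B * A) ((1 + (1 - B * A)) * B) (-A) (1 - A * B) = 1 := by
  set S₀ := 1 - B * A
  set S₁ := 1 - A * B
  have hBA : B * A = 1 - S₀ := (sub_sub_cancel 1 (B * A)).symm
  have hAB : A * B = 1 - S₁ := (sub_sub_cancel 1 (A * B)).symm
  have hA : A * (1 + S₀) = (1 + S₁) * A := by
    rw [Matrix.mul_add, Matrix.add_mul, Matrix.mul_one, Matrix.one_mul, mul_one_sub_mul_comm]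
  have hB : B * S₁ = S₀ * B := mul_one_sub_mul_comm B A
  rw [fromBlocks_multiply, ← fromBlocks_one, fromBlocks_inj]
  refine ⟨?_, ?_, ?_, ?_⟩
  · rw [Matrix.neg_mul, Matrix.mul_neg, neg_neg, Matrix.mul_assoc, hBA,
      mul_self_add_one_add_mul_one_sub]
  · rw [Matrix.neg_mul, Matrix.mul_assoc, hB, ← Matrix.mul_assoc, ← Matrix.mul_assoc,
      ((Commute.one_right S₀).add_right (Commute.refl S₀)).eq, add_neg_cancel]
  · rw [Matrix.mul_neg, mul_one_sub_mul_comm, add_neg_cancel]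
  · rw [← Matrix.mul_assoc, hA, Matrix.mul_assoc, hAB, add_comm,
      mul_self_add_one_add_mul_one_sub]

end Matrix

/-- For arbitrary A, B ∈ M_n(R), with S₀ = 1 - BA and S₁ = 1 - AB, the matrix
L = [[S₀, -(1+S₀)B],[A, S₁]] is invertible with inverse
L⁻¹ = [[S₀, (1+S₀)B],[-A, S₁]]. -/
theorem stmt_16 {R : Type*} [Ring R] (n : ℕ) (A B : Matrix (Fin n) (Fin n) R) :
    Matrix.fromBlocks (1 - B * A) (-((1 + (1 - B * A)) * B)) A (1 - A * B) *
        Matrix.fromBlocks (1 - B * A) ((1 + (1 - B * A)) * B) (-A) (1 - A * B) = 1 ∧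
    Matrix.fromBlocks (1 - B * A) ((1 + (1 - B * A)) * B) (-A) (1 - A * B) *
        Matrix.fromBlocks (1 - B * A) (-((1 + (1 - B * A)) * B)) A (1 - A * B) = 1 := by
  refine ⟨Matrix.fromBlocks_one_sub_mul_mul_fromBlocks_one_sub_mul A B, ?_⟩
  simpa only [neg_mul, mul_neg, neg_neg] using
    Matrix.fromBlocks_one_sub_mul_mul_fromBlocks_one_sub_mul (-A) (-B)
end

section
/- Let R be an associative unital ring and let A, B, K ∈ M_n(R). Set S₀ = 1_n − BA, S₁ = 1_n − AB, S̃₀ = 1_n − B(A+K), S̃₁ = 1_n − (A+K)B, and define L = [[S₀, −(1_n + S₀)B],[A, S₁]] and L̃ = [[S̃₀, −(1_n + S̃₀)B],[A+K, S̃₁]]. Then L̃ = M · L, where M = [[1_n − BK, −BKB],[K, 1_n + KB]]; in particular M = L̃ · L⁻¹ is invertible, and the idempotents P̃ = L̃ · diag(1_n,0_n) · L̃⁻¹ and P = L · diag(1_n,0_n) · L⁻¹ are conjugate: P̃ = M · P · M⁻¹. -/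
/-!
Both `L` and `L̃` are invertible by the same block identity (applied to `(A, B)` and to
`(A + K, B)`), and the block identity `L̃ = M L` is checked entrywise by noncommutative
ring normalisation. Everything else is group theory in the units of `M₂ₙ(R)`: `M = L̃ L⁻¹`
is a unit with inverse `L L̃⁻¹`, and conjugating by `L̃ = M L` is conjugating by `L`
followed by conjugating by `M`.
-/

open Matrix

theorem Units.mul_val_mul_inv_eq_one_of_val_eq_mul {M : Type*} [Monoid M] {u v : Mˣ} {c : M}
    (h : (v : M) = c * u) : c * (u * ↑v⁻¹) = 1 := by
  rw [← mul_assoc, ← h, Units.mul_inv]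

theorem Units.val_mul_inv_mul_eq_one_of_val_eq_mul {M : Type*} [Monoid M] {u v : Mˣ} {c : M}
    (h : (v : M) = c * u) : u * ↑v⁻¹ * c = 1 := by
  have hc : c = v * ↑u⁻¹ := by rw [h, Units.mul_inv_cancel_right]
  rw [hc, mul_assoc, Units.inv_mul_cancel_left, Units.mul_inv]

theorem Units.conj_eq_of_val_eq_mul {M : Type*} [Monoid M] {u v : Mˣ} {c : M}
    (h : (v : M) = c * u) (e : M) : v * e * ↑v⁻¹ = c * (u * e * ↑u⁻¹) * (u * ↑v⁻¹) := by
  simp only [h, mul_assoc, Units.inv_mul_cancel_left]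

section LiftMatrix

variable {m R : Type*} [Fintype m] [DecidableEq m] [Ring R]

def liftMatrix (A B : Matrix m m R) : Matrix (m ⊕ m) (m ⊕ m) R :=
  fromBlocks (1 - B * A) (-((1 + (1 - B * A)) * B)) A (1 - A * B)

def liftMatrixInv (A B : Matrix m m R) : Matrix (m ⊕ m) (m ⊕ m) R :=
  fromBlocks (1 - B * A) ((1 + (1 - B * A)) * B) (-A) (1 - A * B)

theorem liftMatrix_mul_liftMatrixInv (A B : Matrix m m R) :
    liftMatrix A B * liftMatrixInv A B = 1 := by
  rw [liftMatrix, liftMatrixInv, fromBlocks_multiply, ← fromBlocks_one]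
  congr 1 <;> noncomm_ring

theorem liftMatrixInv_mul_liftMatrix (A B : Matrix m m R) :
    liftMatrixInv A B * liftMatrix A B = 1 := by
  rw [liftMatrix, liftMatrixInv, fromBlocks_multiply, ← fromBlocks_one]
  congr 1 <;> noncomm_ring

def liftUnit (A B : Matrix m m R) : (Matrix (m ⊕ m) (m ⊕ m) R)ˣ where
  val := liftMatrix A B
  inv := liftMatrixInv A B
  val_inv := liftMatrix_mul_liftMatrixInv A B
  inv_val := liftMatrixInv_mul_liftMatrix A B

theorem liftMatrix_add (A B K : Matrix m m R) :
    liftMatrix (A + K) B = fromBlocks (1 - B * K) (-(B * K * B)) K (1 + K * B) * liftMatrix A B := by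
  rw [liftMatrix, liftMatrix, fromBlocks_multiply]
  congr 1 <;> noncomm_ring

end LiftMatrix

/-- Changing the lift A to A + K multiplies L on the left by the invertible matrix
M = [[1-BK, -BKB],[K, 1+KB]]: L̃ = M·L, M is invertible (with inverse L·L̃⁻¹), and
the idempotents P̃ = L̃·diag(1,0)·L̃⁻¹ and P = L·diag(1,0)·L⁻¹ satisfy P̃ = M·P·M⁻¹. -/
theorem stmt_18 {R : Type*} [Ring R] (n : ℕ) (A B K : Matrix (Fin n) (Fin n) R) :
    let S₀ := (1 : Matrix (Fin n) (Fin n) R) - B * A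
    let S₁ := (1 : Matrix (Fin n) (Fin n) R) - A * B
    let T₀ := (1 : Matrix (Fin n) (Fin n) R) - B * (A + K)
    let T₁ := (1 : Matrix (Fin n) (Fin n) R) - (A + K) * B
    let L := Matrix.fromBlocks S₀ (-((1 + S₀) * B)) A S₁
    let Linv := Matrix.fromBlocks S₀ ((1 + S₀) * B) (-A) S₁
    let Lt := Matrix.fromBlocks T₀ (-((1 + T₀) * B)) (A + K) T₁
    let Ltinv := Matrix.fromBlocks T₀ ((1 + T₀) * B) (-(A + K)) T₁
    let M := Matrix.fromBlocks (1 - B * K) (-(B * K * B)) K (1 + K * B)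
    let Minv := L * Ltinv
    let e₁ : Matrix (Fin n ⊕ Fin n) (Fin n ⊕ Fin n) R := Matrix.fromBlocks 1 0 0 0
    Lt = M * L ∧ M * Minv = 1 ∧ Minv * M = 1 ∧
      Lt * e₁ * Ltinv = M * (L * e₁ * Linv) * Minv := by
  intro S₀ S₁ T₀ T₁ L Linv Lt Ltinv M Minv e₁
  have hLt : (liftUnit (A + K) B : Matrix (Fin n ⊕ Fin n) (Fin n ⊕ Fin n) R) =
      M * (liftUnit A B : Matrix (Fin n ⊕ Fin n) (Fin n ⊕ Fin n) R) := liftMatrix_add A B K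
  exact ⟨hLt, Units.mul_val_mul_inv_eq_one_of_val_eq_mul hLt,
    Units.val_mul_inv_mul_eq_one_of_val_eq_mul hLt, Units.conj_eq_of_val_eq_mul hLt e₁⟩
end

section
/- Let j₁ : Λ₁ → Λ' and j₂ : Λ₂ → Λ' be unital ring homomorphisms and let Λ be the pullback ring. Let U ∈ M_n(Λ') be invertible and let A, B ∈ M_n(Λ₁) satisfy j₁_*(A) = U and j₁_*(B) = U⁻¹. Set S₀ = 1_n − BA, S₁ = 1_n − AB, P = [[S₀², S₀(1_n+S₀)B],[S₁A, 1_n − S₁²]] ∈ M_{2n}(Λ₁), and e₂ = diag(0_n, 1_n) ∈ M_{2n}(Λ₂). Then j₁_*(P) = diag(0_n, 1_n) = j₂_*(e₂), so every pair of corresponding entries (P_{ij}, (e₂)_{ij}) lies in Λ, and the resulting matrix ℙ_U = (P, e₂) ∈ M_{2n}(Λ) is idempotent, with i₁_*(ℙ_U) = P and i₂_*(ℙ_U) = e₂. -/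
namespace Matrix

theorem isIdempotentElem_of_map_fst_of_map_snd {m R₁ R₂ : Type*} [Fintype m]
    [Semiring R₁] [Semiring R₂] {M : Matrix m m (R₁ × R₂)}
    (h₁ : IsIdempotentElem (M.map (RingHom.fst R₁ R₂)))
    (h₂ : IsIdempotentElem (M.map (RingHom.snd R₁ R₂))) :
    IsIdempotentElem M := by
  rw [IsIdempotentElem, ← Matrix.map_mul] at h₁ h₂
  ext i j
  exacts [congrFun (congrFun h₁ i) j, congrFun (congrFun h₂ i) j]

variable {n R S : Type*} [DecidableEq n] [Ring R] [Ring S]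

theorem map_fromBlocks_zero_one (f : R →+* S) :
    (fromBlocks 0 0 0 1 : Matrix (n ⊕ n) (n ⊕ n) R).map f = fromBlocks 0 0 0 1 := by
  simp [fromBlocks_map]

variable [Fintype n]

theorem isIdempotentElem_fromBlocks_zero_one :
    IsIdempotentElem (fromBlocks 0 0 0 1 : Matrix (n ⊕ n) (n ⊕ n) R) := by
  simp [IsIdempotentElem, fromBlocks_multiply]

theorem map_one_sub_mul_eq_zero (f : R →+* S) {A B : Matrix n n R}
    (h : A.map f * B.map f = 1) : (1 - A * B).map f = 0 := by
  change f.mapMatrix (1 - A * B) = 0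
  rw [map_sub, map_one, map_mul]
  exact sub_eq_zero.mpr h.symm

/-- The idempotent attached to lifts `A`, `B` of an invertible matrix and its inverse; it represents
the boundary of the class of that matrix in Milnor's Mayer–Vietoris sequence. -/
def liftIdempotent (A B : Matrix n n R) : Matrix (n ⊕ n) (n ⊕ n) R :=
  let S₀ := 1 - B * A
  let S₁ := 1 - A * B
  fromBlocks (S₀ * S₀) (S₀ * (1 + S₀) * B) (S₁ * A) (1 - S₁ * S₁)

theorem isIdempotentElem_liftIdempotent (A B : Matrix n n R) :
    IsIdempotentElem (liftIdempotent A B) := by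
  rw [IsIdempotentElem, liftIdempotent, fromBlocks_multiply]
  congr 1 <;> noncomm_ring

theorem map_liftIdempotent (f : R →+* S) {A B : Matrix n n R}
    (hAB : A.map f * B.map f = 1) (hBA : B.map f * A.map f = 1) :
    (liftIdempotent A B).map f = fromBlocks 0 0 0 1 := by
  have hS₀ : f.mapMatrix (1 - B * A) = 0 := map_one_sub_mul_eq_zero f hBA
  have hS₁ : f.mapMatrix (1 - A * B) = 0 := map_one_sub_mul_eq_zero f hAB
  simp only [liftIdempotent, fromBlocks_map]
  congr 1 <;> change f.mapMatrix _ = _ <;> simp only [map_mul, hS₀, hS₁, map_sub, map_one] <;> simp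

end Matrix

theorem mem_ringPullback_of_map_eq {m n Λ₁ Λ₂ Λ' : Type*} [Ring Λ₁] [Ring Λ₂] [Ring Λ']
    {j₁ : Λ₁ →+* Λ'} {j₂ : Λ₂ →+* Λ'} {M : Matrix m n Λ₁} {N : Matrix m n Λ₂}
    (h : M.map j₁ = N.map j₂) (i : m) (j : n) : (M i j, N i j) ∈ ringPullback j₁ j₂ :=
  congrFun (congrFun h i) j

/-- Construction of the double idempotent ℙ_U: if A, B over Λ₁ lift U, U⁻¹ via j₁,
then with S₀ = 1-BA, S₁ = 1-AB, P = [[S₀², S₀(1+S₀)B],[S₁A, 1-S₁²]] and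
e₂ = diag(0,1) over Λ₂, one has j₁_*(P) = diag(0,1) = j₂_*(e₂); all entry pairs
(P_{ij}, (e₂)_{ij}) lie in the pullback ring Λ, and the resulting double matrix
ℙ_U = (P, e₂) over Λ is idempotent with projections P and e₂. -/
theorem stmt_19 {Λ₁ Λ₂ Λ' : Type*} [Ring Λ₁] [Ring Λ₂] [Ring Λ']
    (j₁ : Λ₁ →+* Λ') (j₂ : Λ₂ →+* Λ') (n : ℕ)
    (U U' : Matrix (Fin n) (Fin n) Λ') (hU : U * U' = 1) (hU' : U' * U = 1)
    (A B : Matrix (Fin n) (Fin n) Λ₁) (hA : A.map j₁ = U) (hB : B.map j₁ = U') :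
    let S₀ := (1 : Matrix (Fin n) (Fin n) Λ₁) - B * A
    let S₁ := (1 : Matrix (Fin n) (Fin n) Λ₁) - A * B
    let P : Matrix (Fin n ⊕ Fin n) (Fin n ⊕ Fin n) Λ₁ :=
      Matrix.fromBlocks (S₀ * S₀) (S₀ * (1 + S₀) * B) (S₁ * A) (1 - S₁ * S₁)
    let e₂ : Matrix (Fin n ⊕ Fin n) (Fin n ⊕ Fin n) Λ₂ := Matrix.fromBlocks 0 0 0 1
    let PU : Matrix (Fin n ⊕ Fin n) (Fin n ⊕ Fin n) (Λ₁ × Λ₂) :=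
      Matrix.of fun i j => (P i j, e₂ i j)
    P.map j₁ = Matrix.fromBlocks 0 0 0 1 ∧
    e₂.map j₂ = Matrix.fromBlocks 0 0 0 1 ∧
    (∀ i j : Fin n ⊕ Fin n, (P i j, e₂ i j) ∈ ringPullback j₁ j₂) ∧
    PU * PU = PU ∧
    PU.map (RingHom.fst Λ₁ Λ₂) = P ∧
    PU.map (RingHom.snd Λ₁ Λ₂) = e₂ := by
  intro S₀ S₁ P e₂ PU
  have hP : P.map j₁ = Matrix.fromBlocks 0 0 0 1 :=
    Matrix.map_liftIdempotent j₁ (by rw [hA, hB, hU]) (by rw [hA, hB, hU'])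
  have he₂ : e₂.map j₂ = Matrix.fromBlocks 0 0 0 1 := Matrix.map_fromBlocks_zero_one j₂
  refine ⟨hP, he₂, mem_ringPullback_of_map_eq (hP.trans he₂.symm), ?_, rfl, rfl⟩
  exact Matrix.isIdempotentElem_of_map_fst_of_map_snd
    (Matrix.isIdempotentElem_liftIdempotent A B) Matrix.isIdempotentElem_fromBlocks_zero_one
end
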